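/- Let x be a C¹ solution of the first-order singular Cucker–Smale system and let i ≠ j be indices with x_i(0) < x_j(0) and ν_i = ν_j. Then the i-th and j-th particles collide in finite time and stick together afterwards: there exists t_c ∈ (0, ∞) with x_i(t_c) = x_j(t_c), and x_i(t) = x_j(t) for every t ≥ t_c. -/

import Mathlib

/-!
Let `d = x_j - x_i`. As `Ψ` is odd and monotone, every third particle pulls the pair together,
so wherever `d ≥ 0` we get `d' ≤ -(2κ/N) Ψ(d) = -C d^{1-β}`. Then `(d^β)' ≤ -βC` as long as
`d > 0`, so `d` vanishes before time `d(0)^β / (βC)`. After the collision the same inequality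
keeps `d ≤ 0`, and with the roles of `i` and `j` exchanged also `d ≥ 0`.
-/

open Real Filter Set

/-- The interaction function `Ψ(x) = sign(x)·|x|^{1−β}/(1−β)`. -/
noncomputable def psiCS (β y : ℝ) : ℝ := Real.sign y * |y| ^ (1 - β) / (1 - β)

/-- A C¹ solution on `[0,∞)` of the first-order singular Cucker–Smale system:
`x_i'(t) = ν_i + (κ/N) Σ_k Ψ(x_k(t) − x_i(t))`. -/
def IsCSSol (N : ℕ) (β κ : ℝ) (ν : Fin N → ℝ) (x : ℝ → Fin N → ℝ) : Prop :=
  (∀ i, ContDiffOn ℝ 1 (fun t => x t i) (Set.Ici 0)) ∧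
  ∀ i, ∀ t ≥ (0:ℝ), HasDerivWithinAt (fun s => x s i)
    (ν i + (κ / (N:ℝ)) * ∑ k, psiCS β (x t k - x t i)) (Set.Ici 0) t

theorem image_nonpos_of_deriv_nonpos_on_pos {f f' : ℝ → ℝ} {a b : ℝ}
    (hf : ∀ x ≥ a, HasDerivWithinAt f (f' x) (Ici a) x) (ha : f a ≤ 0)
    (hf' : ∀ x ≥ a, 0 < f x → f' x ≤ 0) (hab : a ≤ b) : f b ≤ 0 := by
  have hcont : ContinuousOn f (Icc a b) := fun x hx =>
    (hf x hx.1).continuousWithinAt.mono Icc_subset_Ici_self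
  have hderiv : ∀ x ∈ Ico a b, HasDerivWithinAt f (f' x) (Ici x) x := fun x hx =>
    (hf x hx.1).mono (Ici_subset_Ici.2 hx.1)
  -- fence `f` by the lines `ε (x - a + 1)`, whose slope beats `f'` wherever they touch `f`
  have hfence : ∀ ε > 0, f b ≤ ε * (b - a + 1) := fun ε hε =>
    image_le_of_deriv_right_lt_deriv_boundary' (B := fun y => ε * (y - a + 1))
      (B' := fun _ => ε) hcont hderiv (by simpa using ha.trans hε.le) (by fun_prop)
      (fun x _ => (((hasDerivWithinAt_id x _).sub_const a).add_const 1).const_mul ε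
        |>.congr_deriv (mul_one ε))
      (fun x hx hfx => (hf' x hx.1 (hfx ▸ by nlinarith [hx.1])).trans_lt hε) ⟨hab, le_rfl⟩
  refine le_of_forall_pos_le_add fun ε hε => ?_
  have hlen : 0 < b - a + 1 := by linarith
  simpa [div_mul_cancel₀ ε hlen.ne'] using hfence (ε / (b - a + 1)) (by positivity)

theorem exists_eq_zero_of_deriv_le_neg_rpow {f f' : ℝ → ℝ} {a β C : ℝ} (hβ : 0 < β)
    (hC : 0 < C) (hf : ∀ x ≥ a, HasDerivWithinAt f (f' x) (Ici a) x) (ha : 0 < f a)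
    (hf' : ∀ x ≥ a, 0 < f x → f' x ≤ -C * f x ^ (1 - β)) :
    ∃ t ∈ Ioc a (a + f a ^ β / (β * C)), f t = 0 := by
  set T := a + f a ^ β / (β * C) with hT
  have haT : a < T := lt_add_of_pos_right a (by positivity)
  have hcont : ContinuousOn f (Icc a T) := fun x hx =>
    (hf x hx.1).continuousWithinAt.mono Icc_subset_Ici_self
  obtain ⟨s, hs, hfs⟩ : ∃ s ∈ Icc a T, f s ≤ 0 := by
    by_contra! hpos
    have hrate : ∀ x ∈ Ico a T, f' x * β * f x ^ (β - 1) ≤ -(β * C) := fun x hx => by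
      have hfx := hpos x (Ico_subset_Icc_self hx)
      calc f' x * β * f x ^ (β - 1)
          ≤ -C * f x ^ (1 - β) * β * f x ^ (β - 1) := by
            gcongr
            exact hf' x hx.1 hfx
        _ = -(β * C) * (f x ^ (1 - β) * f x ^ (β - 1)) := by ring
        _ = -(β * C) := by rw [← rpow_add hfx]; norm_num
    have hdecay : f T ^ β ≤ f a ^ β - β * C * (T - a) :=
      image_le_of_deriv_right_le_deriv_boundary (f := fun y => f y ^ β)
        (B := fun y => f a ^ β - β * C * (y - a)) (B' := fun _ => -(β * C))
        (hcont.rpow_const fun x hx => Or.inl (hpos x hx).ne')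
        (fun x hx => ((hf x hx.1).mono (Ici_subset_Ici.2 hx.1)).rpow_const
          (Or.inl (hpos x (Ico_subset_Icc_self hx)).ne'))
        (by simp) (by fun_prop)
        (fun x _ => (((hasDerivWithinAt_id x _).sub_const a).const_mul (β * C)).const_sub _
          |>.congr_deriv (by ring))
        hrate ⟨haT.le, le_rfl⟩
    have hT0 : f a ^ β - β * C * (T - a) = 0 := by
      rw [hT]; field_simp; ring
    linarith [rpow_pos_of_pos (hpos T ⟨haT.le, le_rfl⟩) β]
  obtain ⟨t, ht, hft⟩ :=
    intermediate_value_Icc' hs.1 (hcont.mono (Icc_subset_Icc_right hs.2)) ⟨hfs, ha.le⟩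
  refine ⟨t, ⟨lt_of_le_of_ne ht.1 ?_, ht.2.trans hs.2⟩, hft⟩
  rintro rfl
  exact ha.ne' hft

theorem Finset.sum_sub_sum_le_of_monotone {ι : Type*} [Fintype ι] {g : ℝ → ℝ}
    (hg : Monotone g) (f : ι → ℝ) {i j : ι} (hij : f i ≤ f j) :
    ∑ k, g (f k - f j) - ∑ k, g (f k - f i) ≤ g (f i - f j) - g (f j - f i) := by
  classical
  rcases eq_or_ne i j with rfl | hne
  · simp
  set h : ι → ℝ := fun k => g (f k - f j) - g (f k - f i)
  have hh : ∀ k, h k ≤ 0 := fun k => sub_nonpos.2 (hg (by linarith))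
  calc ∑ k, g (f k - f j) - ∑ k, g (f k - f i) = ∑ k, h k := (sum_sub_distrib _ _).symm
    _ ≤ ∑ k ∈ {i, j}, h k := sum_le_sum_of_subset_of_nonpos' (subset_univ _) fun k _ _ => hh k
    _ = g (f i - f j) - g (f j - f i) := by simp [h, sum_pair hne]

lemma psiCS_neg (β y : ℝ) : psiCS β (-y) = -psiCS β y := by
  simp [psiCS, Real.sign_neg, neg_div]

lemma psiCS_of_nonneg (β : ℝ) {y : ℝ} (hy : 0 ≤ y) : psiCS β y = y ^ (1 - β) / (1 - β) := by
  rcases hy.eq_or_lt with rfl | hy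
  · rcases eq_or_ne (1 - β) 0 with h | h <;> simp [psiCS, h, zero_rpow]
  · simp [psiCS, Real.sign_of_pos hy, abs_of_pos hy]

lemma psiCS_monotone {β : ℝ} (hβ : β ≤ 1) : Monotone (psiCS β) := by
  refine monotone_of_odd_of_monotoneOn_nonneg (psiCS_neg β) fun y hy z hz hyz => ?_
  rw [psiCS_of_nonneg β hy, psiCS_of_nonneg β hz]
  exact div_le_div_of_nonneg_right (rpow_le_rpow hy hyz (by linarith)) (by linarith)

namespace IsCSSol

variable {N : ℕ} {β κ : ℝ} {ν : Fin N → ℝ} {x : ℝ → Fin N → ℝ} {i j : Fin N}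

lemma exists_gap_deriv (hx : IsCSSol N β κ ν x) (hβ : β ≤ 1) (hκ : 0 ≤ κ) (hν : ν i = ν j) :
    ∃ d' : ℝ → ℝ, (∀ t ≥ 0, HasDerivWithinAt (fun s => x s j - x s i) (d' t) (Ici 0) t) ∧
      ∀ t, x t i ≤ x t j → d' t ≤ -(2 * κ / (N * (1 - β))) * (x t j - x t i) ^ (1 - β) := by
  refine ⟨fun t => κ / N * (∑ k, psiCS β (x t k - x t j) - ∑ k, psiCS β (x t k - x t i)),
    fun t ht => ((hx.2 j t ht).sub (hx.2 i t ht)).congr_deriv (by rw [hν]; ring),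
    fun t ht => ?_⟩
  calc κ / N * (∑ k, psiCS β (x t k - x t j) - ∑ k, psiCS β (x t k - x t i))
      ≤ κ / N * (psiCS β (x t i - x t j) - psiCS β (x t j - x t i)) :=
        mul_le_mul_of_nonneg_left
          (Finset.sum_sub_sum_le_of_monotone (psiCS_monotone hβ) (x t) ht) (by positivity)
    _ = _ := by
        rw [← neg_sub (x t j), psiCS_neg, psiCS_of_nonneg β (sub_nonneg.2 ht), ← div_div]
        ring

lemma le_of_le (hx : IsCSSol N β κ ν x) (hβ : β ≤ 1) (hκ : 0 ≤ κ) (hν : ν i = ν j)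
    {s t : ℝ} (hs : 0 ≤ s) (hst : s ≤ t) (h : x s j ≤ x s i) : x t j ≤ x t i := by
  obtain ⟨d', hd', hbound⟩ := hx.exists_gap_deriv hβ hκ hν
  have hC : 0 ≤ 2 * κ / (N * (1 - β)) := by
    have : 0 ≤ 1 - β := by linarith
    positivity
  refine sub_nonpos.1 <| image_nonpos_of_deriv_nonpos_on_pos (f := fun s => x s j - x s i)
    (fun u hu => (hd' u (hs.trans hu)).mono (Ici_subset_Ici.2 hs)) (sub_nonpos.2 h)
    (fun u _ hu => (hbound u (sub_pos.1 hu).le).trans ?_) hst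
  rw [neg_mul, neg_nonpos]
  exact mul_nonneg hC (rpow_nonneg hu.le _)

lemma exists_collision (hx : IsCSSol N β κ ν x) (hβ0 : 0 < β) (hβ1 : β < 1) (hκ : 0 < κ)
    (hν : ν i = ν j) (h0 : x 0 i < x 0 j) : ∃ tc > 0, x tc i = x tc j := by
  obtain ⟨d', hd', hbound⟩ := hx.exists_gap_deriv hβ1.le hκ.le hν
  have hC : 0 < 2 * κ / (N * (1 - β)) := by
    have : 0 < 1 - β := by linarith
    have : (0 : ℝ) < N := Nat.cast_pos.2 i.pos
    positivity
  obtain ⟨tc, htc, hcol⟩ := exists_eq_zero_of_deriv_le_neg_rpow (f := fun s => x s j - x s i)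
    hβ0 hC hd' (sub_pos.2 h0) fun t _ ht => hbound t (sub_pos.1 ht).le
  exact ⟨tc, htc.1, (sub_eq_zero.1 hcol).symm⟩

end IsCSSol

theorem stmt3 (N : ℕ) (β κ : ℝ) (hβ0 : 0 < β) (hβ1 : β < 1)
    (hκ : 0 < κ) (ν : Fin N → ℝ) (x : ℝ → Fin N → ℝ) (hx : IsCSSol N β κ ν x)
    (i j : Fin N) (h0 : x 0 i < x 0 j) (hν : ν i = ν j) :
    ∃ tc : ℝ, 0 < tc ∧ x tc i = x tc j ∧ ∀ t ≥ tc, x t i = x t j := by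
  obtain ⟨tc, htc, hcol⟩ := hx.exists_collision hβ0 hβ1 hκ hν h0
  refine ⟨tc, htc, hcol, fun t ht => le_antisymm ?_ ?_⟩
  · exact hx.le_of_le hβ1.le hκ.le hν.symm htc.le ht hcol.le
  · exact hx.le_of_le hβ1.le hκ.le hν htc.le ht hcol.ge
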